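/- A formal power series z ∈ 1 + t·ℚ[[t]] has all integer coefficients if and only if in its unique factorization z = ∏_{n≥1} (1 - t^n)^{q_n} all exponents q_n are integers. -/

import Mathlib

/-- Formal exponential `exp x = ∑_{k ≥ 0} x^k / k!` of a power series `x`
(with zero constant term), defined coefficientwise. -/
noncomputable def expS (x : PowerSeries ℚ) : PowerSeries ℚ :=
  PowerSeries.mk fun n =>
    ∑ k ∈ Finset.range (n + 1), PowerSeries.coeff n (x ^ k) / (Nat.factorial k : ℚ)

/-- Formal logarithm `log z = -∑_{k ≥ 1} (1-z)^k / k` of a power series `z`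
(with constant term 1), defined coefficientwise. -/
noncomputable def logS (z : PowerSeries ℚ) : PowerSeries ℚ :=
  PowerSeries.mk fun n =>
    ∑ k ∈ Finset.range (n + 1), (-1) ^ (k + 1) / (k : ℚ) * PowerSeries.coeff n ((z - 1) ^ k)

/-- Rational power `(w)^q := exp (q • log w)` for `w ∈ 1 + t·ℚ[[t]]`. -/
noncomputable def rpowS (q : ℚ) (w : PowerSeries ℚ) : PowerSeries ℚ :=
  expS (q • logS w)

/-!
`rpowS c w` solves `f' = (c • (log w)') f` with `f(0) = 1`, and such solutions are unique; hence
`rpowS (a + b) w = rpowS a w * rpowS b w` and `rpowS 1 w = w`, so integer powers of `1 - tⁿ` have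
integer coefficients. Moreover `(1 - tⁿ)^c ≡ 1 - c tⁿ mod tⁿ⁺¹`, so the coefficient of `tᵐ⁺¹` in `z`
is that of the partial product `∏_{n ≤ m} (1 - tⁿ)^{q n}` minus `q (m + 1)`. Induction on `m` gives
both directions.
-/

open PowerSeries

namespace PowerSeries

variable {R : Type*} [CommRing R]

theorem coeff_subst_eq_sum_range {a : R⟦X⟧} (ha : constantCoeff a = 0) (f : R⟦X⟧) (n : ℕ) :
    coeff n (f.subst a) = ∑ d ∈ Finset.range (n + 1), coeff d f * coeff n (a ^ d) := by
  rw [coeff_subst' (HasSubst.of_constantCoeff_zero' ha)]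
  refine finsum_eq_sum_of_support_subset _ fun d hd => ?_
  rw [Function.mem_support] at hd
  rw [Finset.coe_range, Set.mem_Iio, Nat.lt_succ_iff]
  by_contra! hnd
  exact hd (by rw [X_pow_dvd_iff.mp (pow_dvd_pow_of_dvd (X_dvd_iff.mpr ha) d) n hnd, smul_zero])

theorem sq_dvd_subst_sub {a : R⟦X⟧} (ha : HasSubst a) (f : R⟦X⟧) :
    a ^ 2 ∣ f.subst a - (C (coeff 0 f) + C (coeff 1 f) * a) := by
  obtain ⟨g, hg⟩ : X ^ 2 ∣ f - (C (coeff 0 f) + C (coeff 1 f) * X) := by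
    refine X_pow_dvd_iff.mpr fun m hm => ?_
    interval_cases m <;> simp [coeff_C]
  refine ⟨g.subst a, ?_⟩
  have := congrArg (subst a) hg
  simp only [subst_sub ha, subst_add ha, subst_mul ha, subst_pow ha, subst_X ha, subst_C] at this
  exact this

theorem eq_of_derivative_eq_mul [IsAddTorsionFree R] {a f g : R⟦X⟧}
    (hf : d⁄dX R f = a * f) (hg : d⁄dX R g = a * g) (h0 : constantCoeff f = constantCoeff g) :
    f = g := by
  rw [← sub_eq_zero]
  set e := f - g
  have he : d⁄dX R e = a * e := by rw [map_sub, hf, hg, mul_sub]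
  refine PowerSeries.ext fun n => ?_
  rw [map_zero]
  induction n using Nat.strong_induction_on with
  | _ n ih =>
    rcases n with _ | m
    · simp [e, h0]
    · have hm : coeff m (d⁄dX R e) = 0 := by
        rw [he, coeff_mul]
        exact Finset.sum_eq_zero fun p hp => by
          rw [ih p.2 (by have := Finset.HasAntidiagonal.mem_antidiagonal.mp hp; omega), mul_zero]
      rw [coeff_derivative, mul_comm, ← Nat.cast_succ, ← nsmul_eq_mul] at hm
      simpa using (smul_eq_zero.mp hm).resolve_left (Nat.succ_ne_zero m)

end PowerSeries

theorem expS_eq_subst {x : ℚ⟦X⟧} (hx : constantCoeff x = 0) : expS x = (exp ℚ).subst x := by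
  ext n
  simp [expS, coeff_subst_eq_sum_range hx, div_eq_inv_mul]

theorem logS_eq_logOf {w : ℚ⟦X⟧} (hw : constantCoeff w = 1) : logS w = logOf w := by
  have hw' : constantCoeff (w - 1) = 0 := by simp [hw]
  ext n
  rw [logOf_eq, coeff_subst_eq_sum_range hw', logS, coeff_mk]
  refine Finset.sum_congr rfl fun d _ => ?_
  rcases d with _ | d <;> simp

theorem constantCoeff_logS (w : ℚ⟦X⟧) : constantCoeff (logS w) = 0 := by
  rw [← coeff_zero_eq_constantCoeff_apply]
  simp [logS]

theorem constantCoeff_expS (x : ℚ⟦X⟧) : constantCoeff (expS x) = 1 := by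
  rw [← coeff_zero_eq_constantCoeff_apply]
  simp [expS]

theorem derivative_expS {x : ℚ⟦X⟧} (hx : constantCoeff x = 0) :
    d⁄dX ℚ (expS x) = d⁄dX ℚ x * expS x := by
  rw [expS_eq_subst hx, derivative_subst (HasSubst.of_constantCoeff_zero' hx), derivative_exp,
    mul_comm]

theorem one_add_X_mul_derivative_log : (1 + X) * d⁄dX ℚ (log ℚ) = 1 := by
  ext n
  rcases n with _ | n
  · simp [deriv_log]
  · simp [deriv_log, add_mul, pow_succ]

theorem mul_derivative_logS {w : ℚ⟦X⟧} (hw : constantCoeff w = 1) :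
    w * d⁄dX ℚ (logS w) = d⁄dX ℚ w := by
  have ha : HasSubst (w - 1) := HasSubst.of_constantCoeff_zero' (by simp [hw])
  have hsubst : (1 + X : ℚ⟦X⟧).subst (w - 1) = w := by
    rw [subst_add ha, subst_X ha, ← map_one (C (R := ℚ)), subst_C]
    simp
  rw [logS_eq_logOf hw, logOf_eq, derivative_subst ha, map_sub, derivative_one, sub_zero,
    ← mul_assoc]
  nth_rw 1 [← hsubst]
  rw [← subst_mul ha, one_add_X_mul_derivative_log, ← map_one (C (R := ℚ)), subst_C]
  simp

theorem constantCoeff_rpowS (c : ℚ) (w : ℚ⟦X⟧) : constantCoeff (rpowS c w) = 1 :=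
  constantCoeff_expS _

theorem constantCoeff_smul_logS (c : ℚ) (w : ℚ⟦X⟧) : constantCoeff (c • logS w) = 0 := by
  rw [smul_eq_C_mul, map_mul, constantCoeff_logS, mul_zero]

theorem derivative_rpowS (c : ℚ) (w : ℚ⟦X⟧) :
    d⁄dX ℚ (rpowS c w) = (c • d⁄dX ℚ (logS w)) * rpowS c w := by
  rw [rpowS, derivative_expS (constantCoeff_smul_logS c w), Derivation.map_smul]

theorem rpowS_add (a b : ℚ) (w : ℚ⟦X⟧) : rpowS (a + b) w = rpowS a w * rpowS b w := by
  refine eq_of_derivative_eq_mul (derivative_rpowS (a + b) w) ?_ (by simp [constantCoeff_rpowS])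
  rw [Derivation.leibniz, derivative_rpowS, derivative_rpowS, smul_eq_mul, smul_eq_mul, add_smul]
  ring

theorem rpowS_zero (w : ℚ⟦X⟧) : rpowS 0 w = 1 :=
  eq_of_derivative_eq_mul (a := 0) (by simp [derivative_rpowS]) (by simp)
    (by simp [constantCoeff_rpowS])

theorem rpowS_one {w : ℚ⟦X⟧} (hw : constantCoeff w = 1) : rpowS 1 w = w :=
  eq_of_derivative_eq_mul (derivative_rpowS 1 w)
    (by rw [one_smul, ← mul_derivative_logS hw, mul_comm]) (by rw [constantCoeff_rpowS, hw])

theorem rpowS_natCast {w : ℚ⟦X⟧} (hw : constantCoeff w = 1) (n : ℕ) : rpowS n w = w ^ n := by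
  induction n with
  | zero => simp [rpowS_zero]
  | succ n ih => rw [Nat.cast_succ, rpowS_add, ih, rpowS_one hw, pow_succ]

theorem rpowS_neg_mul_rpowS (c : ℚ) (w : ℚ⟦X⟧) : rpowS (-c) w * rpowS c w = 1 := by
  rw [← rpowS_add, neg_add_cancel, rpowS_zero]

theorem X_pow_succ_dvd_rpowS_one_sub_X_pow {n : ℕ} (hn : n ≠ 0) (c : ℚ) :
    X ^ (n + 1) ∣ rpowS c (1 - X ^ n) - (1 - C c * X ^ n) := by
  have hsq : ∀ y : ℚ⟦X⟧, X ^ n ∣ y → X ^ (n + 1) ∣ y ^ 2 := fun y hy =>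
    calc (X : ℚ⟦X⟧) ^ (n + 1) ∣ (X ^ n) ^ 2 := by rw [← pow_mul]; exact pow_dvd_pow _ (by omega)
    _ ∣ y ^ 2 := pow_dvd_pow_of_dvd hy 2
  have hXn : constantCoeff (-X ^ n : ℚ⟦X⟧) = 0 := by simp [hn]
  have hL' : logS (1 - X ^ n) = (log ℚ).subst (-X ^ n : ℚ⟦X⟧) := by
    rw [logS_eq_logOf (by simp [hn]), logOf_eq, sub_sub_cancel_left]
  set L := logS (1 - X ^ n : ℚ⟦X⟧)
  have hL : X ^ (n + 1) ∣ L + X ^ n := by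
    have := sq_dvd_subst_sub (HasSubst.of_constantCoeff_zero' hXn) (log ℚ)
    rw [← hL', coeff_one_log, coeff_zero_eq_constantCoeff_apply, constantCoeff_log, map_zero,
      map_one, zero_add, one_mul, sub_neg_eq_add] at this
    exact (hsq _ (dvd_neg.mpr dvd_rfl)).trans this
  have hLn : X ^ n ∣ L := by
    simpa using (dvd_sub ((pow_dvd_pow X n.le_succ).trans hL) (dvd_refl (X ^ n)))
  have hx0 : constantCoeff (c • L) = 0 := constantCoeff_smul_logS c _
  have hE := sq_dvd_subst_sub (HasSubst.of_constantCoeff_zero' hx0) (exp ℚ)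
  rw [← expS_eq_subst hx0] at hE
  have key : rpowS c (1 - X ^ n) - (1 - C c * X ^ n) =
      (expS (c • L) - (1 + c • L)) + C c * (L + X ^ n) := by
    rw [rpowS, smul_eq_C_mul]; ring
  rw [key]
  refine dvd_add ((hsq _ ?_).trans (by simpa using hE)) (dvd_mul_of_dvd_right hL _)
  rw [smul_eq_C_mul]
  exact dvd_mul_of_dvd_right hLn _

theorem coeff_mul_rpowS_one_sub_X_pow {n : ℕ} (hn : n ≠ 0) (c : ℚ) {A : ℚ⟦X⟧}
    (hA : constantCoeff A = 1) :
    coeff n (A * rpowS c (1 - X ^ n)) = coeff n A - c := by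
  obtain ⟨r, hr⟩ := X_pow_succ_dvd_rpowS_one_sub_X_pow hn c
  rw [← sub_add_cancel (rpowS c (1 - X ^ n)) (1 - C c * X ^ n), hr, mul_add,
    mul_left_comm, mul_sub, mul_one, map_add, map_sub, coeff_X_pow_mul', if_neg (by omega)]
  simp [mul_comm A, mul_assoc, coeff_X_pow_mul', hA]

noncomputable def integralSeries : Subring ℚ⟦X⟧ := (map (Int.castRingHom ℚ)).range

theorem mem_integralSeries_iff {f : ℚ⟦X⟧} :
    f ∈ integralSeries ↔ ∀ n, ∃ k : ℤ, coeff n f = k := by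
  constructor
  · rintro ⟨F, rfl⟩ n
    exact ⟨coeff n F, by simp⟩
  · intro hf
    choose k hk using hf
    exact ⟨mk k, ext fun n => by simp [hk]⟩

theorem one_sub_X_pow_mem_integralSeries (n : ℕ) : 1 - X ^ n ∈ integralSeries :=
  ⟨1 - X ^ n, by simp⟩

theorem mem_integralSeries_of_mul_eq_one {f g : ℚ⟦X⟧} (hf : f ∈ integralSeries)
    (hf0 : constantCoeff f = 1) (hgf : g * f = 1) : g ∈ integralSeries := by
  obtain ⟨F, rfl⟩ := hf
  have hF0 : constantCoeff F = 1 := by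
    rw [← coeff_zero_eq_constantCoeff_apply, coeff_map, coeff_zero_eq_constantCoeff_apply] at hf0
    simpa using hf0
  obtain ⟨u, rfl⟩ := isUnit_iff_constantCoeff.mpr (hF0 ▸ isUnit_one)
  refine ⟨↑u⁻¹, ?_⟩
  calc map (Int.castRingHom ℚ) ↑u⁻¹
        = map (Int.castRingHom ℚ) ↑u⁻¹ * (g * map (Int.castRingHom ℚ) ↑u) := by
        rw [hgf, mul_one]
    _ = g := by
        rw [mul_left_comm (map (Int.castRingHom ℚ) ↑u⁻¹), ← map_mul, Units.inv_mul, map_one,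
          mul_one]

theorem rpowS_intCast_mem_integralSeries {w : ℚ⟦X⟧} (hw : w ∈ integralSeries)
    (hw0 : constantCoeff w = 1) (k : ℤ) : rpowS k w ∈ integralSeries := by
  obtain ⟨n, rfl | rfl⟩ := Int.eq_nat_or_neg k
  · rw [Int.cast_natCast, rpowS_natCast hw0]
    exact pow_mem hw n
  · refine mem_integralSeries_of_mul_eq_one (pow_mem hw n) (by simp [hw0]) ?_
    rw [Int.cast_neg, Int.cast_natCast, ← rpowS_natCast hw0, rpowS_neg_mul_rpowS]

theorem stmt_3_general (z : PowerSeries ℚ)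
    (q : ℕ → ℚ)
    (hq : ∀ m : ℕ, PowerSeries.coeff m z =
      PowerSeries.coeff m
        (∏ n ∈ Finset.Icc 1 m, rpowS (q n) (1 - PowerSeries.X ^ n))) :
    (∀ n : ℕ, ∃ k : ℤ, PowerSeries.coeff n z = (k : ℚ)) ↔
      (∀ n : ℕ, 1 ≤ n → ∃ k : ℤ, q n = (k : ℚ)) := by
  set P : ℕ → ℚ⟦X⟧ := fun m => ∏ n ∈ Finset.Icc 1 m, rpowS (q n) (1 - X ^ n)
  have hP_mem : ∀ m, (∀ n ∈ Finset.Icc 1 m, ∃ k : ℤ, q n = k) → P m ∈ integralSeries :=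
    fun m h => Subring.prod_mem _ fun n hn => by
      obtain ⟨k, hk⟩ := h n hn
      rw [hk]
      exact rpowS_intCast_mem_integralSeries (one_sub_X_pow_mem_integralSeries n)
        (by simp [Nat.one_le_iff_ne_zero.mp (Finset.mem_Icc.mp hn).1]) k
  have hq_succ : ∀ m, q (m + 1) = coeff (m + 1) (P m) - coeff (m + 1) z := fun m => by
    rw [hq, Finset.prod_Icc_succ_top (by omega), coeff_mul_rpowS_one_sub_X_pow m.succ_ne_zero _
      (by simp [map_prod, constantCoeff_rpowS])]
    ring
  rw [← mem_integralSeries_iff]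
  constructor
  · intro hz n hn
    induction n using Nat.strong_induction_on with
    | _ n ih =>
      obtain ⟨m, rfl⟩ := Nat.exists_eq_add_one_of_ne_zero (by omega : n ≠ 0)
      rw [hq_succ]
      refine mem_integralSeries_iff.mp (sub_mem (hP_mem m fun i hi => ?_) hz) (m + 1)
      exact ih i (by grind) (Finset.mem_Icc.mp hi).1
  · intro hqZ
    refine mem_integralSeries_iff.mpr fun m => ?_
    rw [hq]
    exact mem_integralSeries_iff.mp (hP_mem m fun n hn => hqZ n (Finset.mem_Icc.mp hn).1) m

/-- A series `z ∈ 1 + t·ℚ[[t]]` has all integer coefficients iff in its factorization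
`z = ∏_{n ≥ 1} (1 - tⁿ)^{q n}` all exponents `q n` are integers. -/
theorem stmt_3 (z : PowerSeries ℚ) (hz : PowerSeries.constantCoeff z = 1)
    (q : ℕ → ℚ) (hq0 : q 0 = 0)
    (hq : ∀ m : ℕ, PowerSeries.coeff m z =
      PowerSeries.coeff m
        (∏ n ∈ Finset.Icc 1 m, rpowS (q n) (1 - PowerSeries.X ^ n))) :
    (∀ n : ℕ, ∃ k : ℤ, PowerSeries.coeff n z = (k : ℚ)) ↔
      (∀ n : ℕ, 1 ≤ n → ∃ k : ℤ, q n = (k : ℚ)) :=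
  stmt_3_general z q hq
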